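/- arXiv:1611.01216 — 4 statements merged into one kernel-verified Lean document; each statement's English description precedes it below -/
import Mathlib

section
/- Let G be a group, H ≤ G a finite-index subgroup, and M ≤ G a subgroup with MN = G for every finite-index normal subgroup N of G. Then (M ∩ H)·K = H for every finite-index normal subgroup K of H; that is, M ∩ H is dense in the profinite topology of H. -/
/-- If `M` is dense in the profinite topology of `G` and `H ≤ G` has finite index,
then `M ∩ H` is dense in the profinite topology of `H`. -/
theorem dense_inter_finiteIndex_dense {G : Type*} [Group G]
    (H M : Subgroup G) (hH : H.FiniteIndex)
    (hdense : ∀ N : Subgroup G, N.Normal → N.FiniteIndex → M ⊔ N = ⊤) :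
    ∀ K : Subgroup H, K.Normal → K.FiniteIndex →
      (M.subgroupOf H) ⊔ K = ⊤ := by
  intro K hKn hK
  set K' : Subgroup G := K.map H.subtype with hK'
  have hK'fi : K'.FiniteIndex := by
    constructor
    rw [hK', Subgroup.index_map_subtype]
    exact mul_ne_zero hK.index_ne_zero hH.index_ne_zero
  have hNfi : K'.normalCore.FiniteIndex := Subgroup.finiteIndex_normalCore K'
  have hsup := hdense K'.normalCore (Subgroup.normalCore_normal K') hNfi
  rw [eq_top_iff]
  intro h _
  haveI := Subgroup.normalCore_normal K'
  have : (h : G) ∈ ((M ⊔ K'.normalCore : Subgroup G) : Set G) := hsup ▸ Subgroup.mem_top _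
  rw [Subgroup.mul_normal] at this
  obtain ⟨m, hm, n, hn, hmn⟩ := this
  have hnK' : n ∈ K' := K'.normalCore_le hn
  have hnH : n ∈ H := by
    obtain ⟨k, _, rfl⟩ := hnK'
    exact k.2
  have hmH : m ∈ H := by
    have : m = (h : G) * n⁻¹ := by rw [← hmn]; group
    rw [this]; exact H.mul_mem h.2 (H.inv_mem hnH)
  have goal : (h : H) ∈ ((M.subgroupOf H ⊔ K : Subgroup H) : Set H) := by
    rw [Subgroup.mul_normal]
    refine ⟨⟨m, hmH⟩, hm, ⟨n, hnH⟩, ?_, ?_⟩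
    · obtain ⟨k, hk, hke⟩ := hnK'
      have : k = ⟨n, hnH⟩ := Subtype.ext hke
      rwa [← this]
    · exact Subtype.ext hmn
  exact goal
end

section
/- Let G be a group acting transitively on each level of a spherically homogeneous rooted tree, and suppose every nontrivial normal subgroup of G contains the derived subgroup rist_G(n)' of some level rigid stabilizer. If moreover there exists m such that rist_G(n)' contains the level stabilizer St_G(m+n) for all n, then G is just infinite: every nontrivial normal subgroup of G has finite index. -/
/-- If every nontrivial normal subgroup of `G` contains the derived subgroup
`ristD n` of some level rigid stabilizer, and some shift of the level
stabilizers (which have finite index) is contained in the `ristD n`,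
then `G` is just infinite: every nontrivial normal subgroup has finite index. -/
theorem just_infinite_of_rigid_stabilizers {G : Type*} [Group G] [Infinite G]
    (St ristD : ℕ → Subgroup G)
    (hStfin : ∀ n, (St n).FiniteIndex)
    (hrist : ∀ K : Subgroup G, K.Normal → K ≠ ⊥ → ∃ n, ristD n ≤ K)
    (hshift : ∃ m, ∀ n, St (m + n) ≤ ristD n) :
    ∀ K : Subgroup G, K.Normal → K ≠ ⊥ → K.FiniteIndex := by
  intro K hKn hKb
  obtain ⟨n, hn⟩ := hrist K hKn hKb
  obtain ⟨m, hm⟩ := hshift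
  have h : St (m + n) ≤ K := (hm n).trans hn
  haveI := hStfin (m + n)
  exact Subgroup.finiteIndex_of_le h
end

section
/- Let G be a group generated by two elements s and t of order 2 acting on a set X. If t has exactly one fixed point x₀ ∈ X, s has no fixed points, and the action on the orbit of x₀ is faithful enough that the orbital graph is connected with every vertex of degree 2 (loops counting 1), then the orbit of x₀ is infinite and the map n ↦ (st)^n · x₀ is a bijection ℤ → G·x₀. -/
/-- If `G = ⟨s, t⟩` with `s² = t² = 1` acts on `X`, `t` fixes exactly the point
`x₀` in the orbit of `x₀` and `s` fixes no point of the orbit, then the orbit of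
`x₀` is infinite and `n ↦ (st)^n • x₀` is a bijection from `ℤ` onto the orbit. -/
theorem dihedral_orbit_bijection {G X : Type*} [Group G] [MulAction G X]
    (s t : G) (hgen : Subgroup.closure {s, t} = ⊤)
    (hs : s ^ 2 = 1) (ht : t ^ 2 = 1) (x₀ : X)
    (htx₀ : t • x₀ = x₀)
    (htfix : ∀ y ∈ MulAction.orbit G x₀, y ≠ x₀ → t • y ≠ y)
    (hsfix : ∀ y ∈ MulAction.orbit G x₀, s • y ≠ y) :
    (MulAction.orbit G x₀).Infinite ∧
      Function.Injective (fun n : ℤ => (s * t) ^ n • x₀) ∧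
      Set.range (fun n : ℤ => (s * t) ^ n • x₀) = MulAction.orbit G x₀ := by
  classical
  rw [sq] at hs ht
  have hs' : s⁻¹ = s := inv_eq_of_mul_eq_one_left hs
  have ht' : t⁻¹ = t := inv_eq_of_mul_eq_one_left ht
  set r := s * t with hr
  have hrt : t * r * t⁻¹ = r⁻¹ := by
    rw [hr, mul_inv_rev, hs', ht',
      show t * (s * t) * t = t * s * (t * t) by group, ht, mul_one]
  have hrs : s * r * s⁻¹ = r⁻¹ := by
    rw [hr, mul_inv_rev, hs', ht',
      show s * (s * t) * s = s * s * (t * s) by group, hs, one_mul]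
  -- conjugation formulas for powers
  have keyt : ∀ n : ℤ, t * r ^ n = r ^ (-n) * t := by
    intro n
    have : t * r ^ n * t⁻¹ = r ^ (-n) := by
      rw [← conj_zpow, hrt, zpow_neg, inv_zpow]
    exact mul_inv_eq_iff_eq_mul.mp this
  have keys : ∀ n : ℤ, s * r ^ n = r ^ (-n) * s := by
    intro n
    have : s * r ^ n * s⁻¹ = r ^ (-n) := by
      rw [← conj_zpow, hrs, zpow_neg, inv_zpow]
    exact mul_inv_eq_iff_eq_mul.mp this
  -- action formulas
  have tf : ∀ n : ℤ, t • (r ^ n • x₀) = r ^ (-n) • x₀ := by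
    intro n
    rw [← mul_smul, keyt n, mul_smul, htx₀]
  have hsx : r • x₀ = s • x₀ := by rw [hr, mul_smul, htx₀]
  have sf : ∀ n : ℤ, s • (r ^ n • x₀) = r ^ (1 - n) • x₀ := by
    intro n
    rw [← mul_smul, keys n, mul_smul, ← hsx, ← mul_smul,
      show r ^ (-n) * r = r ^ (-n) * r ^ (1 : ℤ) by rw [zpow_one], ← zpow_add,
      show (-n + 1 : ℤ) = 1 - n by omega]
  have cancel : ∀ k : ℤ, r ^ (-k) • (r ^ k • x₀) = x₀ := by
    intro k
    rw [← mul_smul, ← zpow_add, show (-k + k : ℤ) = 0 by omega, zpow_zero, one_smul]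
  -- no nontrivial power of r fixes x₀
  have hinjaux : ∀ k : ℤ, r ^ k • x₀ = x₀ → k = 0 := by
    intro k hk
    by_contra hk0
    have hk' : r ^ (-k) • x₀ = x₀ := by
      conv_lhs => rw [← hk]
      exact cancel k
    have hmem : ∃ m : ℕ, 0 < m ∧ r ^ (m : ℤ) • x₀ = x₀ := by
      refine ⟨k.natAbs, Int.natAbs_pos.mpr hk0, ?_⟩
      rcases Int.natAbs_eq k with h | h
      · rw [← h]; exact hk
      · rw [show ((k.natAbs : ℤ)) = -k by omega]; exact hk'
    obtain ⟨hd0, hd⟩ := Nat.find_spec hmem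
    set d := Nat.find hmem with hdd
    have hmin : ∀ m : ℕ, 0 < m → m < d → r ^ (m : ℤ) • x₀ ≠ x₀ := by
      intro m hm hmd hc
      exact Nat.find_min hmem hmd ⟨hm, hc⟩
    rcases Nat.even_or_odd d with ⟨m, hm⟩ | ⟨m, hm⟩
    · -- d = m + m : t fixes r^m • x₀ ≠ x₀
      have hm0 : 0 < m := by omega
      have hy : t • (r ^ (m : ℤ) • x₀) = r ^ (m : ℤ) • x₀ := by
        rw [tf]
        calc r ^ (-(m : ℤ)) • x₀ = r ^ (-(m : ℤ)) • (r ^ ((d : ℕ) : ℤ) • x₀) := by rw [hd]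
          _ = r ^ (m : ℤ) • x₀ := by
              rw [← mul_smul, ← zpow_add, show (-(m : ℤ) + (d : ℕ)) = (m : ℤ) by omega]
      exact htfix _ (MulAction.mem_orbit _ _) (hmin m hm0 (by omega)) hy
    · -- d = 2m + 1 : s fixes r^(m+1) • x₀
      have hy : s • (r ^ ((m : ℤ) + 1) • x₀) = r ^ ((m : ℤ) + 1) • x₀ := by
        rw [sf]
        calc r ^ (1 - ((m : ℤ) + 1)) • x₀
            = r ^ (1 - ((m : ℤ) + 1)) • (r ^ ((d : ℕ) : ℤ) • x₀) := by rw [hd]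
          _ = r ^ ((m : ℤ) + 1) • x₀ := by
              rw [← mul_smul, ← zpow_add,
                show (1 - ((m : ℤ) + 1) + (d : ℕ)) = (m : ℤ) + 1 by omega]
      exact hsfix _ (MulAction.mem_orbit _ _) hy
  -- injectivity
  have hinj : Function.Injective (fun n : ℤ => r ^ n • x₀) := by
    intro m n hmn
    simp only at hmn
    have h1 : r ^ (m - n) • x₀ = x₀ := by
      calc r ^ (m - n) • x₀ = r ^ (-n) • (r ^ m • x₀) := by
            rw [← mul_smul, ← zpow_add, show (-n + m : ℤ) = m - n by omega]
        _ = r ^ (-n) • (r ^ n • x₀) := by rw [hmn]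
        _ = x₀ := cancel n
    have := hinjaux _ h1
    omega
  -- the range is invariant under the whole group
  set S := Set.range (fun n : ℤ => r ^ n • x₀) with hS
  have hSmem : ∀ n : ℤ, r ^ n • x₀ ∈ S := fun n => ⟨n, rfl⟩
  have hsS : ∀ y ∈ S, s • y ∈ S := by
    rintro y ⟨n, rfl⟩
    exact ⟨1 - n, (sf n).symm⟩
  have htS : ∀ y ∈ S, t • y ∈ S := by
    rintro y ⟨n, rfl⟩
    exact ⟨-n, (tf n).symm⟩
  have hall : ∀ g : G, (∀ y ∈ S, g • y ∈ S) ∧ (∀ y ∈ S, g⁻¹ • y ∈ S) := by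
    intro g
    have hg : g ∈ Subgroup.closure ({s, t} : Set G) := by rw [hgen]; trivial
    refine Subgroup.closure_induction
      (p := fun g _ => (∀ y ∈ S, g • y ∈ S) ∧ (∀ y ∈ S, g⁻¹ • y ∈ S))
      ?_ ?_ ?_ ?_ hg
    · rintro x (rfl | rfl)
      · exact ⟨hsS, by rw [hs']; exact hsS⟩
      · exact ⟨htS, by rw [ht']; exact htS⟩
    · constructor <;> intro y hy <;> simpa using hy
    · intro a b _ _ ha hb
      constructor
      · intro y hy; rw [mul_smul]; exact ha.1 _ (hb.1 y hy)
      · intro y hy; rw [mul_inv_rev, mul_smul]; exact hb.2 _ (ha.2 y hy)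
    · intro a _ ha
      exact ⟨ha.2, by simpa [inv_inv] using ha.1⟩
  have hx₀S : x₀ ∈ S := ⟨0, by simp⟩
  have hrange : S = MulAction.orbit G x₀ := by
    ext y
    constructor
    · rintro ⟨n, rfl⟩
      exact MulAction.mem_orbit _ _
    · rintro ⟨g, rfl⟩
      exact (hall g).1 _ hx₀S
  refine ⟨?_, hinj, hrange⟩
  rw [← hrange]
  exact Set.infinite_range_of_injective hinj
end

section
/- Let G be a group acting on a rooted tree, let M ≤ G, and let g ∈ G be an element stabilizing a vertex v such that all conjugates m⁻¹gm (m ∈ M) project into M_v := φ_v(St_M(v)) whenever they stabilize v, where φ_v is the projection to the subtree at v. If every element α of St(v) ∩ ⟨M, g⟩ can be written as a product of M-conjugates of g^{±1} times an element of St_M(v), then φ_v(St_{⟨M,g⟩}(v)) ≤ ⟨M_v, conjugates of φ-images⟩; in particular, if g ∈ rist_G(v) with φ_v(g) = h, then φ_v(St_{⟨M,g⟩}(v)) ≤ ⟨M_v, h⟩. -/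
/-- Abstract form of the rigid-stabilizer projection computation: let `Stv` be
the stabilizer of a vertex `v`, `φ : Stv → Q` the projection to the subtree at
`v`, `M ≤ G`, and `g ∈ Stv` a "rigid" element: all `M`-conjugates of `g`
stabilize `v`, and conjugates by elements of `M` not stabilizing `v` have
trivial projection. Then the projection at `v` of the stabilizer of `v` in
`⟨M, g⟩` is contained in `⟨M_v, φ(g)⟩`. -/
theorem rigid_projection_of_adjoin {G Q : Type*} [Group G] [Group Q]
    (Stv : Subgroup G) (φ : Stv →* Q) (M : Subgroup G)
    (g : G) (hg : g ∈ Stv)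
    (hconj : ∀ m ∈ M, m⁻¹ * g * m ∈ Stv)
    (hrist : ∀ m ∈ M, m ∉ Stv → ∀ hm : m⁻¹ * g * m ∈ Stv,
      φ ⟨m⁻¹ * g * m, hm⟩ = 1) :
    Subgroup.map φ (((M ⊔ Subgroup.closure {g}) ⊓ Stv).subgroupOf Stv)
      ≤ Subgroup.map φ ((M ⊓ Stv).subgroupOf Stv)
          ⊔ Subgroup.closure {φ ⟨g, hg⟩} := by
  set S : Set G := {x | ∃ m ∈ M, x = m⁻¹ * g * m} with hS
  set C : Subgroup G := Subgroup.closure S with hC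
  set T : Subgroup Q := Subgroup.map φ ((M ⊓ Stv).subgroupOf Stv)
          ⊔ Subgroup.closure {φ ⟨g, hg⟩} with hT
  -- C ≤ Stv
  have hCS : C ≤ Stv := by
    rw [hC, Subgroup.closure_le]
    rintro x ⟨m, hm, rfl⟩
    exact hconj m hm
  -- M normalizes C
  have hnorm : ∀ m ∈ M, ∀ c ∈ C, m⁻¹ * c * m ∈ C := by
    intro m hm c hc
    induction hc using Subgroup.closure_induction with
    | mem x hx =>
      obtain ⟨n, hn, rfl⟩ := hx
      apply Subgroup.subset_closure
      exact ⟨n * m, M.mul_mem hn hm, by group⟩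
    | one => simpa using C.one_mem
    | mul x y _ _ hx hy =>
      have : m⁻¹ * (x * y) * m = (m⁻¹ * x * m) * (m⁻¹ * y * m) := by group
      rw [this]; exact C.mul_mem hx hy
    | inv x _ hx =>
      have : m⁻¹ * x⁻¹ * m = (m⁻¹ * x * m)⁻¹ := by group
      rw [this]; exact C.inv_mem hx
  -- decomposition of M ⊔ C
  have hdec : ∀ x ∈ M ⊔ C, ∃ m ∈ M, ∃ c ∈ C, x = m * c := by
    intro x hx
    rw [Subgroup.sup_eq_closure] at hx
    induction hx using Subgroup.closure_induction with
    | mem x hx =>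
      rcases hx with hx | hx
      · exact ⟨x, hx, 1, C.one_mem, by group⟩
      · exact ⟨1, M.one_mem, x, hx, by group⟩
    | one => exact ⟨1, M.one_mem, 1, C.one_mem, by group⟩
    | mul x y _ _ hx hy =>
      obtain ⟨m1, hm1, c1, hc1, rfl⟩ := hx
      obtain ⟨m2, hm2, c2, hc2, rfl⟩ := hy
      exact ⟨m1 * m2, M.mul_mem hm1 hm2, (m2⁻¹ * c1 * m2) * c2,
        C.mul_mem (hnorm m2 hm2 c1 hc1) hc2, by group⟩
    | inv x _ hx =>
      obtain ⟨m, hm, c, hc, rfl⟩ := hx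
      exact ⟨m⁻¹, M.inv_mem hm, m * c⁻¹ * m⁻¹,
        by simpa using hnorm m⁻¹ (M.inv_mem hm) c⁻¹ (C.inv_mem hc), by group⟩
  -- φ of elements of C lands in T
  have hφC : ∀ c (hc : c ∈ C) (h : c ∈ Stv), φ ⟨c, h⟩ ∈ T := by
    intro c hc
    induction hc using Subgroup.closure_induction with
    | mem x hx =>
      intro h
      obtain ⟨m, hm, rfl⟩ := hx
      by_cases hms : m ∈ Stv
      · have hx : (⟨m⁻¹ * g * m, h⟩ : Stv) = ⟨m, hms⟩⁻¹ * ⟨g, hg⟩ * ⟨m, hms⟩ := by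
          ext; rfl
        rw [hx, map_mul, map_mul, map_inv]
        have hmT : φ ⟨m, hms⟩ ∈ T := by
          apply Subgroup.mem_sup_left
          exact ⟨⟨m, hms⟩, ⟨hm, hms⟩, rfl⟩
        have hgT : φ ⟨g, hg⟩ ∈ T :=
          Subgroup.mem_sup_right (Subgroup.subset_closure rfl)
        exact T.mul_mem (T.mul_mem (T.inv_mem hmT) hgT) hmT
      · rw [hrist m hm hms h]; exact T.one_mem
    | one =>
      intro h
      have : (⟨(1 : G), h⟩ : Stv) = 1 := rfl
      rw [this, map_one]; exact T.one_mem
    | mul x y hx' hy' hx hy =>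
      intro h
      have hxs : x ∈ Stv := hCS hx'
      have hys : y ∈ Stv := hCS hy'
      have : (⟨x * y, h⟩ : Stv) = ⟨x, hxs⟩ * ⟨y, hys⟩ := rfl
      rw [this, map_mul]
      exact T.mul_mem (hx hxs) (hy hys)
    | inv x hx' hx =>
      intro h
      have hxs : x ∈ Stv := hCS hx'
      have : (⟨x⁻¹, h⟩ : Stv) = ⟨x, hxs⟩⁻¹ := rfl
      rw [this, map_inv]
      exact T.inv_mem (hx hxs)
  -- main argument
  rintro q ⟨y, hy, rfl⟩
  have hy' : (y : G) ∈ (M ⊔ Subgroup.closure {g}) ⊓ Stv := hy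
  have hyMC : (y : G) ∈ M ⊔ C := by
    have h1 : M ⊔ Subgroup.closure {g} ≤ M ⊔ C := by
      apply sup_le le_sup_left
      rw [Subgroup.closure_le]
      rintro x rfl
      exact Subgroup.mem_sup_right (Subgroup.subset_closure ⟨1, M.one_mem, by group⟩)
    exact h1 hy'.1
  obtain ⟨m, hm, c, hc, hxy⟩ := hdec _ hyMC
  have hcs : c ∈ Stv := hCS hc
  have hms : m ∈ Stv := by
    have : m = (y : G) * c⁻¹ := by rw [hxy]; group
    rw [this]; exact Stv.mul_mem y.2 (Stv.inv_mem hcs)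
  have hyeq : y = (⟨m, hms⟩ : Stv) * ⟨c, hcs⟩ := by
    ext; exact hxy
  rw [hyeq, map_mul]
  refine T.mul_mem ?_ (hφC c hc hcs)
  apply Subgroup.mem_sup_left
  exact ⟨⟨m, hms⟩, ⟨hm, hms⟩, rfl⟩
end
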